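/- arXiv:1808.07603 — 2 statements merged into one kernel-verified Lean document; each statement's English description precedes it below -/
import Mathlib

section
/- There is no nontrivial ε-differentially private mechanism c* that on every database instance D outputs, with probability 1, a set of values contained in the active domain c(D) of D, provided the intersection of active domains over all database instances is empty. Any such mechanism must return the empty set with probability 1 on every instance. -/
/-!
Differential privacy bounds `P D S` by a multiple of `P D' S` for neighbors, so a zero
probability spreads backwards along neighbor chains, hence to every instance. A nonempty
output `S ∋ v` has probability zero on an instance whose active domain misses `v`, and such an
instance exists because the active domains have empty intersection. So all mass sits on `∅`.
-/

theorem Relation.ReflTransGen.eq_zero_of_le_mul {α R : Type*} [MulZeroClass R] [PartialOrder R]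
    {r : α → α → Prop} {f : α → R} {c : R} (hf : ∀ a, 0 ≤ f a)
    (hr : ∀ a b, r a b → f a ≤ c * f b) {a b : α} (hab : Relation.ReflTransGen r a b)
    (hb : f b = 0) : f a = 0 := by
  induction hab using Relation.ReflTransGen.head_induction_on with
  | refl => exact hb
  | head hac _ ih => exact le_antisymm (by simpa [ih] using hr _ _ hac) (hf _)

/-- "Bad bins" theorem: there is no nontrivial ε-differentially private mechanism
that only returns subsets of the active domain.  Model: `P D S` is the probability
that the mechanism outputs the value set `S : Set V` on database `D`, `adom D` is
the active domain of `D`.  If the mechanism never outputs a set that is not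
contained in the active domain, the set of instances is connected by neighbor
chains, and the intersection of all active domains is empty, then the mechanism
returns the empty set with probability 1 on every instance. -/
theorem no_active_domain_mechanism {Ω V : Type*} (neighbor : Ω → Ω → Prop)
    (P : Ω → Set V → ℝ) (adom : Ω → Set V) (ε : ℝ)
    (hnonneg : ∀ D S, 0 ≤ P D S)
    (htotal : ∀ D, HasSum (fun S : Set V => P D S) 1)
    (hDP : ∀ D D', neighbor D D' → ∀ S : Set V, P D S ≤ Real.exp ε * P D' S)
    (hconn : ∀ D D' : Ω, Relation.ReflTransGen neighbor D D')
    (hactive : ∀ D : Ω, ∀ S : Set V, ¬ S ⊆ adom D → P D S = 0)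
    (hempty : (⋂ D : Ω, adom D) = ∅) :
    ∀ D : Ω, P D (∅ : Set V) = 1 := by
  intro D
  have hzero : ∀ S : Set V, S ≠ ∅ → P D S = 0 := by
    intro S hS
    obtain ⟨v, hv⟩ := Set.nonempty_iff_ne_empty.mpr hS
    obtain ⟨D', hD'⟩ := Set.iInter_eq_empty_iff.mp hempty v
    exact (hconn D D').eq_zero_of_le_mul (f := (P · S)) (fun _ => hnonneg _ _)
      (fun a b hab => hDP a b hab S) (hactive D' S fun h => hD' (h hv))
  exact (hasSum_single ∅ hzero).unique (htotal D)
end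

section
/- Fix ε > 0 and ρ ∈ (0,1), and let τ(n) = -(1/ε)·ln(2(1 - ρ^{1/n})). For any fixed true count s > 0, the probability that a Laplace(s, 1/ε)-distributed noisy count exceeds τ(n) tends to 0 as n → ∞. -/
/-! For `τ ≥ s` the Laplace tail is exactly `exp (-ε (τ - s)) / 2`, which tends to `0` as
`τ → ∞`. The threshold does tend to `∞`: `ρ ^ (1/n) → 1` from below, so
`2 (1 - ρ ^ (1/n)) → 0⁺` and its logarithm tends to `-∞`. -/

open Real MeasureTheory Set Filter Topology

lemma integral_Ici_laplace_of_le {ε s τ : ℝ} (hε : 0 < ε) (hτ : s ≤ τ) :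
    ∫ x in Ici τ, ε / 2 * exp (-ε * |x - s|) = exp (-ε * (τ - s)) / 2 := by
  have hdensity : ∀ x ∈ Ioi τ,
      ε / 2 * exp (-ε * |x - s|) = ε / 2 * exp (ε * s) * exp (-(ε * x)) := by
    intro x hx
    rw [abs_of_nonneg (by linarith [mem_Ioi.1 hx]), mul_assoc, ← exp_add]
    ring_nf
  rw [integral_Ici_eq_integral_Ioi, setIntegral_congr_fun measurableSet_Ioi hdensity,
    integral_const_mul, integral_comp_mul_left_Ioi (fun y => exp (-y)) τ hε,
    integral_exp_neg_Ioi, smul_eq_mul, show -ε * (τ - s) = ε * s + -(ε * τ) by ring, exp_add]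
  field_simp

lemma tendsto_integral_Ici_laplace_atTop {ε : ℝ} (hε : 0 < ε) (s : ℝ) :
    Tendsto (fun τ => ∫ x in Ici τ, ε / 2 * exp (-ε * |x - s|)) atTop (𝓝 0) := by
  have hexp : Tendsto (fun τ => exp (-ε * (τ - s)) / 2) atTop (𝓝 0) := by
    simpa [sub_eq_add_neg] using (tendsto_exp_atBot.comp
      ((tendsto_atTop_add_const_right _ (-s) tendsto_id).const_mul_atTop_of_neg
        (neg_neg_of_pos hε))).div_const 2
  refine hexp.congr' ?_
  filter_upwards [eventually_ge_atTop s] with τ hτ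
  exact (integral_Ici_laplace_of_le hε hτ).symm

lemma tendsto_rpow_one_div_nat_atTop {ρ : ℝ} (hρ : 0 < ρ) :
    Tendsto (fun n : ℕ => ρ ^ ((1 : ℝ) / n)) atTop (𝓝 1) := by
  simpa using tendsto_const_nhds.rpow tendsto_one_div_atTop_nhds_zero_nat (Or.inl hρ.ne')

lemma tendsto_retention_threshold_atTop {ε ρ : ℝ} (hε : 0 < ε) (hρ0 : 0 < ρ) (hρ1 : ρ < 1) :
    Tendsto (fun n : ℕ => -(1 / ε) * log (2 * (1 - ρ ^ ((1 : ℝ) / n)))) atTop atTop := by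
  have hgap : Tendsto (fun n : ℕ => 2 * (1 - ρ ^ ((1 : ℝ) / n))) atTop (𝓝[>] 0) := by
    refine tendsto_nhdsWithin_iff.2 ⟨?_, ?_⟩
    · simpa using ((tendsto_rpow_one_div_nat_atTop hρ0).const_sub 1).const_mul 2
    · filter_upwards [eventually_ge_atTop 1] with n hn
      have : ρ ^ ((1 : ℝ) / n) < 1 :=
        rpow_lt_one hρ0.le hρ1 (by positivity)
      simp only [mem_Ioi]
      linarith
  exact (tendsto_log_nhdsGT_zero.comp hgap).const_mul_atBot_of_neg
    (neg_neg_of_pos (one_div_pos.2 hε))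

theorem retention_probability_vanishes_general {ε ρ s : ℝ} (hε : 0 < ε)
    (hρ0 : 0 < ρ) (hρ1 : ρ < 1) :
    Filter.Tendsto
      (fun n : ℕ =>
        ∫ x in Set.Ici (-(1 / ε) * Real.log (2 * (1 - ρ ^ ((1 : ℝ) / n)))),
          (ε / 2) * Real.exp (-ε * |x - s|))
      Filter.atTop (nhds 0) :=
  (tendsto_integral_Ici_laplace_atTop hε s).comp (tendsto_retention_threshold_atTop hε hρ0 hρ1)

/-- Fix `ε > 0` and `ρ ∈ (0,1)`, and let `τ(n) = -(1/ε)·ln(2(1 - ρ^(1/n)))`.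
For any fixed true count `s > 0`, the probability that a Laplace(s, 1/ε)-distributed
noisy count exceeds `τ(n)` tends to 0 as `n → ∞`. -/
theorem retention_probability_vanishes {ε ρ s : ℝ} (hε : 0 < ε)
    (hρ0 : 0 < ρ) (hρ1 : ρ < 1) (hs : 0 < s) :
    Filter.Tendsto
      (fun n : ℕ =>
        ∫ x in Set.Ici (-(1 / ε) * Real.log (2 * (1 - ρ ^ ((1 : ℝ) / n)))),
          (ε / 2) * Real.exp (-ε * |x - s|))
      Filter.atTop (nhds 0) :=
  retention_probability_vanishes_general hε hρ0 hρ1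
end
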